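/- Let L be a simple arrangement of non-vertical lines in ℝ². If F and F' are adjacent faces of L, then their levels differ by exactly one: |level(F) − level(F')| = 1. -/

import Mathlib

/-!
A face is a connected set missing every line, so it lies strictly on one side of each line, and
a point of its closure off a line lies on that same side. Let `p` be a point of the common edge of
adjacent faces `F`, `F'` on the line `l₀`. No other line passes through `p`, so `F` and `F'` lie on
the same side of every line other than `l₀`. They lie on opposite sides of `l₀`: otherwise both
meet the same small half-disc at `p` bounded by `l₀`, a convex set missing all lines, and would be
the same component. So the sets of lines below `F` and below `F'` differ exactly by `l₀`.
-/

open Set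

/-- A point of the Euclidean plane. -/
abbrev Pt : Type := ℝ × ℝ

/-- A line: a 1-dimensional affine subspace of ℝ², described parametrically. -/
def IsLine (l : Set Pt) : Prop :=
  ∃ p v : Pt, v ≠ 0 ∧ l = {q : Pt | ∃ t : ℝ, q = p + t • v}

/-- A simple line arrangement: a finite set of lines, any two distinct lines meet in
exactly one point, and no point lies on three distinct lines. -/
def SimpleArrangement (L : Finset (Set Pt)) : Prop :=
  (∀ l ∈ L, IsLine l) ∧
  (∀ l ∈ L, ∀ l' ∈ L, l ≠ l' → ∃! p : Pt, p ∈ l ∧ p ∈ l') ∧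
  (∀ p : Pt, {l : Set Pt | l ∈ L ∧ p ∈ l}.ncard ≤ 2)

/-- The faces of the arrangement: connected components of the complement of the union. -/
def IsFace (L : Finset (Set Pt)) (F : Set Pt) : Prop :=
  ∃ p : Pt, p ∉ (⋃ l ∈ L, l) ∧ F = connectedComponentIn (⋃ l ∈ L, l)ᶜ p

/-- Two faces are adjacent (share an edge) if they are distinct and some point of
the intersection of their closures lies on exactly one line of `L`. -/
def Adjacent (L : Finset (Set Pt)) (F F' : Set Pt) : Prop :=
  F ≠ F' ∧ ∃ p ∈ closure F ∩ closure F', ∃! l : Set Pt, l ∈ L ∧ p ∈ l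

/-- A dual path: a finite sequence of pairwise distinct faces with consecutive faces
adjacent. Its length is the length of the list. -/
def IsDualPath (L : Finset (Set Pt)) (P : List (Set Pt)) : Prop :=
  (∀ F ∈ P, IsFace L F) ∧ P.Nodup ∧ P.Chain' (Adjacent L)

/-- A line is non-vertical if it is the graph of an affine function `x ↦ a·x + b`. -/
def NonVertical (l : Set Pt) : Prop :=
  ∃ a b : ℝ, l = {q : Pt | q.2 = a * q.1 + b}

/-- A face `F` is above a non-vertical line `l` if `y > a·x + b` for every `(x, y) ∈ F`. -/
def Above (F l : Set Pt) : Prop :=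
  ∃ a b : ℝ, l = {q : Pt | q.2 = a * q.1 + b} ∧ ∀ q ∈ F, a * q.1 + b < q.2

/-- The level of a face: the number of lines of `L` that the face is above. -/
noncomputable def faceLevel (L : Finset (Set Pt)) (F : Set Pt) : ℕ :=
  {l : Set Pt | l ∈ L ∧ Above F l}.ncard

open Topology

lemma NonVertical.isClosed {l : Set Pt} (hl : NonVertical l) : IsClosed l := by
  obtain ⟨a, b, rfl⟩ := hl
  exact isClosed_eq continuous_snd (by fun_prop)

lemma eq_of_graph_eq {a b a' b' : ℝ}
    (h : {q : Pt | q.2 = a * q.1 + b} = {q : Pt | q.2 = a' * q.1 + b'}) : a = a' ∧ b = b' := by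
  have h0 : ((0 : ℝ), b) ∈ {q : Pt | q.2 = a' * q.1 + b'} := h ▸ by simp
  have h1 : ((1 : ℝ), a + b) ∈ {q : Pt | q.2 = a' * q.1 + b'} := h ▸ by simp
  simp only [mem_ofPred_eq] at h0 h1
  constructor <;> linarith

lemma above_iff_subset {F l : Set Pt} {a b : ℝ} (hl : l = {q : Pt | q.2 = a * q.1 + b}) :
    Above F l ↔ F ⊆ {q : Pt | a * q.1 + b < q.2} := by
  refine ⟨?_, fun h => ⟨a, b, hl, h⟩⟩
  rintro ⟨a', b', hl', hF⟩
  obtain ⟨rfl, rfl⟩ := eq_of_graph_eq (hl.symm.trans hl')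
  exact hF

lemma isLinearMap_snd_sub_mul_fst (a : ℝ) : IsLinearMap ℝ fun q : Pt => q.2 - a * q.1 :=
  ⟨fun x y => by simp only [Prod.fst_add, Prod.snd_add]; ring,
   fun c x => by simp only [Prod.smul_fst, Prod.smul_snd, smul_eq_mul]; ring⟩

lemma convex_setOf_lt_affine (a b : ℝ) : Convex ℝ {q : Pt | a * q.1 + b < q.2} := by
  simpa only [lt_sub_iff_add_lt'] using convex_halfSpace_gt (isLinearMap_snd_sub_mul_fst a) b

lemma convex_setOf_affine_lt (a b : ℝ) : Convex ℝ {q : Pt | q.2 < a * q.1 + b} := by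
  simpa only [sub_lt_iff_lt_add'] using convex_halfSpace_lt (isLinearMap_snd_sub_mul_fst a) b

namespace IsFace

variable {L : Finset (Set Pt)} {F F' : Set Pt}

lemma isPreconnected (hF : IsFace L F) : IsPreconnected F := by
  obtain ⟨p, -, rfl⟩ := hF
  exact isPreconnected_connectedComponentIn

lemma subset_compl (hF : IsFace L F) : F ⊆ (⋃ l ∈ L, l)ᶜ := by
  obtain ⟨p, -, rfl⟩ := hF
  exact connectedComponentIn_subset _ _

lemma nonempty (hF : IsFace L F) : F.Nonempty := by
  obtain ⟨p, hp, rfl⟩ := hF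
  exact ⟨p, mem_connectedComponentIn hp⟩

lemma eq_of_isPreconnected (hF : IsFace L F) (hF' : IsFace L F') {C : Set Pt}
    (hC : IsPreconnected C) (hCL : C ⊆ (⋃ l ∈ L, l)ᶜ)
    (hFC : (F ∩ C).Nonempty) (hF'C : (F' ∩ C).Nonempty) : F = F' := by
  obtain ⟨p, -, rfl⟩ := hF
  obtain ⟨p', -, rfl⟩ := hF'
  obtain ⟨q, hqF, hqC⟩ := hFC
  obtain ⟨q', hq'F', hq'C⟩ := hF'C
  have hq'F : q' ∈ connectedComponentIn (⋃ l ∈ L, l)ᶜ q :=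
    hC.subset_connectedComponentIn hqC hCL hq'C
  rw [connectedComponentIn_eq hqF, connectedComponentIn_eq hq'F, ← connectedComponentIn_eq hq'F']

variable {l : Set Pt} {a b : ℝ}

lemma subset_above_or_subset_below (hF : IsFace L F) (hlL : l ∈ L)
    (hl : l = {q : Pt | q.2 = a * q.1 + b}) :
    F ⊆ {q : Pt | a * q.1 + b < q.2} ∨ F ⊆ {q : Pt | q.2 < a * q.1 + b} := by
  refine hF.isPreconnected.subset_or_subset (isOpen_lt (by fun_prop) (by fun_prop))
    (isOpen_lt (by fun_prop) (by fun_prop)) ?_ fun q hq => ?_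
  · exact disjoint_left.mpr fun q (h : a * q.1 + b < q.2) (h' : q.2 < a * q.1 + b) =>
      lt_asymm h h'
  · have hql : q ∉ l := fun h => hF.subset_compl hq (mem_biUnion hlL h)
    rw [hl, mem_ofPred_eq] at hql
    rw [mem_union, mem_ofPred, mem_ofPred]
    exact lt_or_gt_of_ne (Ne.symm hql)

lemma not_above_iff (hF : IsFace L F) (hlL : l ∈ L) (hl : l = {q : Pt | q.2 = a * q.1 + b}) :
    ¬ Above F l ↔ F ⊆ {q : Pt | q.2 < a * q.1 + b} := by
  rw [above_iff_subset hl]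
  refine ⟨(hF.subset_above_or_subset_below hlL hl).resolve_left, fun hbelow habove => ?_⟩
  obtain ⟨q, hq⟩ := hF.nonempty
  exact lt_asymm (α := ℝ) (hbelow hq) (habove hq)

lemma above_iff_of_mem_closure (hF : IsFace L F) (hlL : l ∈ L)
    (hl : l = {q : Pt | q.2 = a * q.1 + b}) {p : Pt} (hp : p ∈ closure F) (hpl : p ∉ l) :
    Above F l ↔ a * p.1 + b < p.2 := by
  rw [hl, mem_ofPred_eq] at hpl
  by_cases hFl : Above F l
  · have hle : p ∈ {q : Pt | a * q.1 + b ≤ q.2} := closure_minimal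
      (((above_iff_subset hl).mp hFl).trans fun q (h : a * q.1 + b < q.2) => h.le)
      (isClosed_le (f := fun q : Pt => a * q.1 + b) (by fun_prop) continuous_snd) hp
    exact iff_of_true hFl (lt_of_le_of_ne hle (Ne.symm hpl))
  · have hle : p ∈ {q : Pt | q.2 ≤ a * q.1 + b} := closure_minimal
      (((hF.not_above_iff hlL hl).mp hFl).trans fun q (h : q.2 < a * q.1 + b) => h.le)
      (isClosed_le (g := fun q : Pt => a * q.1 + b) continuous_snd (by fun_prop)) hp
    exact iff_of_false hFl (not_lt_of_ge hle)

lemma eq_of_mem_closure_of_subset (hF : IsFace L F) (hF' : IsFace L F') {H C : Set Pt}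
    (hH : Convex ℝ H) (hC : Convex ℝ C) {p : Pt} (hCp : C ∈ 𝓝 p)
    (hCH : C ∩ H ⊆ (⋃ l ∈ L, l)ᶜ) (hFH : F ⊆ H) (hF'H : F' ⊆ H)
    (hpF : p ∈ closure F) (hpF' : p ∈ closure F') : F = F' := by
  obtain ⟨q, hqC, hqF⟩ := mem_closure_iff_nhds.mp hpF C hCp
  obtain ⟨q', hq'C, hq'F'⟩ := mem_closure_iff_nhds.mp hpF' C hCp
  exact hF.eq_of_isPreconnected hF' (hC.inter hH).isPreconnected hCH
    ⟨q, hqF, hqC, hFH hqF⟩ ⟨q', hq'F', hq'C, hF'H hq'F'⟩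

lemma not_above_iff_above_of_mem_closure (hF : IsFace L F) (hF' : IsFace L F') (hFF' : F ≠ F')
    (hLc : ∀ l ∈ L, IsClosed l) (hlL : l ∈ L) (hl : l = {q : Pt | q.2 = a * q.1 + b}) {p : Pt}
    (hpF : p ∈ closure F) (hpF' : p ∈ closure F') (hp : ∀ l' ∈ L, p ∈ l' → l' = l) :
    ¬ Above F l ↔ Above F' l := by
  have hUp : (⋃ l' ∈ L.erase l, l')ᶜ ∈ 𝓝 p := by
    refine (isClosed_biUnion_finset fun l' hl' => hLc l' (Finset.mem_of_mem_erase hl'))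
      |>.isOpen_compl.mem_nhds ?_
    simp only [mem_compl_iff, mem_iUnion, not_exists]
    exact fun l' hl' hpl' => Finset.ne_of_mem_erase hl' (hp l' (Finset.mem_of_mem_erase hl') hpl')
  obtain ⟨ε, hε, hball⟩ := Metric.mem_nhds_iff.mp hUp
  -- near `p` only `l` is present, so each open half-disc at `p` cut out by `l` avoids all lines
  have hside : ∀ H ⊆ lᶜ, Metric.ball p ε ∩ H ⊆ (⋃ l' ∈ L, l')ᶜ := by
    rintro H hH q ⟨hqB, hqH⟩
    simp only [mem_compl_iff, mem_iUnion, not_exists]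
    intro l' hl'L hql'
    by_cases hl' : l' = l
    · exact hH hqH (hl' ▸ hql')
    · exact hball hqB (mem_biUnion (Finset.mem_erase.mpr ⟨hl', hl'L⟩) hql')
  have habove : {q : Pt | a * q.1 + b < q.2} ⊆ lᶜ := by
    rintro q (hq : a * q.1 + b < q.2) (hql : q ∈ l)
    rw [hl, mem_ofPred] at hql
    exact hq.ne' hql
  have hbelow : {q : Pt | q.2 < a * q.1 + b} ⊆ lᶜ := by
    rintro q (hq : q.2 < a * q.1 + b) (hql : q ∈ l)
    rw [hl, mem_ofPred] at hql
    exact hq.ne hql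
  refine not_iff.mp fun hFF'l => hFF' ?_
  by_cases hFl : Above F l
  · exact hF.eq_of_mem_closure_of_subset hF' (convex_setOf_lt_affine a b) (convex_ball p ε)
      (Metric.ball_mem_nhds p hε) (hside _ habove) ((above_iff_subset hl).mp hFl)
      ((above_iff_subset hl).mp (hFF'l.mp hFl)) hpF hpF'
  · exact hF.eq_of_mem_closure_of_subset hF' (convex_setOf_affine_lt a b) (convex_ball p ε)
      (Metric.ball_mem_nhds p hε) (hside _ hbelow) ((hF.not_above_iff hlL hl).mp hFl)
      ((hF'.not_above_iff hlL hl).mp (hFF'l.not.mp hFl)) hpF hpF'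

end IsFace

lemma Set.abs_ncard_sub_ncard_eq_one {α : Type*} {s t : Set α} (hs : s.Finite) (ht : t.Finite)
    {x : α} (hx : ¬ (x ∈ s ↔ x ∈ t)) (hst : ∀ y ≠ x, y ∈ s ↔ y ∈ t) :
    |(s.ncard : ℤ) - t.ncard| = 1 := by
  have key : ∀ {s t : Set α}, t.Finite → x ∈ s → x ∉ t → (∀ y ≠ x, y ∈ s ↔ y ∈ t) →
      s.ncard = t.ncard + 1 := by
    intro s t ht hxs hxt hst
    rw [← ncard_insert_of_notMem hxt ht]
    congr 1
    ext y
    by_cases hy : y = x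
    · subst hy; exact iff_of_true hxs (mem_insert y t)
    · rw [hst y hy, mem_insert_iff, or_iff_right hy]
  by_cases hxs : x ∈ s
  · rw [key ht hxs (fun hxt => hx (iff_of_true hxs hxt)) hst]
    simp
  · have hxt : x ∈ t := not_not.mp fun hxt => hx (iff_of_false hxs hxt)
    rw [key hs hxt hxs fun y hy => (hst y hy).symm]
    simp

theorem statement15_general (L : Finset (Set Pt))
    (hnv : ∀ l ∈ L, NonVertical l)
    (F F' : Set Pt) (hF : IsFace L F) (hF' : IsFace L F')
    (hadj : Adjacent L F F') :
    |(faceLevel L F : ℤ) - (faceLevel L F' : ℤ)| = 1 := by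
  obtain ⟨hFF', p, ⟨hpF, hpF'⟩, l₀, ⟨hl₀L, -⟩, hl₀uniq⟩ := hadj
  have hp : ∀ l ∈ L, p ∈ l → l = l₀ := fun l hlL hpl => hl₀uniq l ⟨hlL, hpl⟩
  obtain ⟨a, b, hl₀⟩ := hnv l₀ hl₀L
  refine Set.abs_ncard_sub_ncard_eq_one (x := l₀) (L.finite_toSet.subset fun l hl => hl.1)
    (L.finite_toSet.subset fun l hl => hl.1) ?_ fun l hll₀ => and_congr_right fun hlL => ?_
  · simpa only [mem_ofPred, hl₀L, true_and] using not_iff.mpr <|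
      hF.not_above_iff_above_of_mem_closure hF' hFF' (fun l hl => (hnv l hl).isClosed) hl₀L hl₀
        hpF hpF' hp
  · obtain ⟨a', b', hl⟩ := hnv l hlL
    have hpl : p ∉ l := fun hpl => hll₀ (hp l hlL hpl)
    rw [hF.above_iff_of_mem_closure hlL hl hpF hpl, hF'.above_iff_of_mem_closure hlL hl hpF' hpl]

/-- In a simple arrangement of non-vertical lines, the levels of adjacent faces differ by
exactly one. -/
theorem statement15 (L : Finset (Set Pt)) (hL : SimpleArrangement L)
    (hnv : ∀ l ∈ L, NonVertical l)
    (F F' : Set Pt) (hF : IsFace L F) (hF' : IsFace L F')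
    (hadj : Adjacent L F F') :
    |(faceLevel L F : ℤ) - (faceLevel L F' : ℤ)| = 1 :=
  statement15_general L hnv F F' hF hF' hadj
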